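/- Let P^{ex} and P^{ap} be twice continuously differentiable positive functions on (0,T)×(0,∞)² with P^{ex}(r_d,r_e,0) = P^{ap}(r_d,r_e,0) = 1, f^{ex} = ln P^{ex}, f^{ap} = ln P^{ap}, and g = f^{ap} - f^{ex}. Suppose that as τ → 0⁺ (for fixed r_d, r_e > 0): ∂_{r_d}f^{ex} = O(τ), ∂_{r_e}f^{ex} = O(τ), ∂_{r_d}f^{ap} = O(τ), ∂_{r_e}f^{ap} = O(τ²), and that g admits a power series expansion g = Σ_{k≥ω} c_k(r_d,r_e)τ^k with ω ≥ 1, and that g satisfies a PDE whose right-hand side is h + E where h = k₃τ³ + O(τ⁴) and each error term E is a product of the form (∂f^{ex})·(∂f^{ex} - ∂f^{ap}). Then ω = 4 and c₄(r_d,r_e) = -(1/4)·k₃(r_d,r_e). -/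

import Mathlib

open Real Topology Filter Asymptotics

/-!
Since its coefficients tend to zero, `g(τ) = Σ c_k τ^k` is a power series of radius at least one,
so its derivative is the power series `Σ (k+1) c_{k+1} τ^k`, and Taylor's formula gives
`g'(τ) = ω c_ω τ^(ω-1) + O(τ^ω)`. In the PDE every other term is `O(τ^ω)` or `O(τ^4)`, hence
`ω c_ω τ^(ω-1) + K₃ τ³ = O(τ^(min ω 4))`. Two nonzero monomials can only cancel to that order if
they have the same degree and opposite coefficients: `ω - 1 = 3` and `4 c₄ + K₃ = 0`.
-/

section PowerSeries

variable {𝕜 : Type*} [NontriviallyNormedField 𝕜]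

namespace FormalMultilinearSeries

theorem one_le_radius_ofScalars_of_summable {c : ℕ → 𝕜} (hc : Summable c) :
    1 ≤ (ofScalars 𝕜 c).radius := by
  simpa using (ofScalars 𝕜 c).le_radius_of_tendsto (r := 1) (l := 0) (by
    simpa [ofScalars_norm] using hc.tendsto_atTop_zero.norm)

theorem hasFPowerSeriesOnBall_tsum_ofScalars [CompleteSpace 𝕜] {c : ℕ → 𝕜} (hc : Summable c) :
    HasFPowerSeriesOnBall (fun x => ∑' k, c k * x ^ k) (ofScalars 𝕜 c) 0
      (ofScalars 𝕜 c).radius := by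
  convert (ofScalars 𝕜 c).hasFPowerSeriesOnBall
    (zero_lt_one.trans_le (one_le_radius_ofScalars_of_summable hc)) using 1
  ext x
  simp [FormalMultilinearSeries.sum, mul_comm]

end FormalMultilinearSeries

open FormalMultilinearSeries

theorem HasFPowerSeriesOnBall.deriv_ofScalars [CompleteSpace 𝕜] {f : 𝕜 → 𝕜} {c : ℕ → 𝕜} {x : 𝕜}
    {r : ENNReal} (hf : HasFPowerSeriesOnBall f (ofScalars 𝕜 c) x r) :
    HasFPowerSeriesOnBall (deriv f) (ofScalars 𝕜 fun n => (n + 1) * c (n + 1)) x r := by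
  convert (ContinuousLinearMap.apply 𝕜 𝕜 (1 : 𝕜)).comp_hasFPowerSeriesOnBall hf.fderiv using 1
  · ext y; simp
  · ext n; simp

theorem HasFPowerSeriesAt.isBigO_sub_sum_pow {f : 𝕜 → 𝕜} {c : ℕ → 𝕜}
    (hf : HasFPowerSeriesAt f (ofScalars 𝕜 c) 0) (n : ℕ) :
    (fun x => f x - ∑ k ∈ Finset.range n, c k * x ^ k) =O[𝓝 0] fun x => x ^ n := by
  have := hf.isBigO_sub_partialSum_pow n
  simp_rw [← norm_pow, isBigO_norm_right] at this
  simpa [partialSum, ofScalars_apply_eq, mul_comm] using this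

theorem isBigO_deriv_tsum_pow_sub_leading [CompleteSpace 𝕜] {c : ℕ → 𝕜} (hc : Summable c)
    {ω : ℕ} (hω : 1 ≤ ω) (hcz : ∀ k < ω, c k = 0) :
    (fun x => deriv (fun t => ∑' k, c k * t ^ k) x - ω * c ω * x ^ (ω - 1)) =O[𝓝 0]
      fun x => x ^ ω := by
  obtain ⟨n, rfl⟩ : ∃ n, ω = n + 1 := ⟨ω - 1, by omega⟩
  have hleading (x : 𝕜) : ∑ k ∈ Finset.range (n + 1), (k + 1) * c (k + 1) * x ^ k =
      (n + 1 : ℕ) * c (n + 1) * x ^ n := by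
    rw [Finset.sum_range_succ, Finset.sum_eq_zero fun k hk => by
      rw [hcz (k + 1) (by simp at hk; omega)]; ring]
    push_cast; ring
  simpa [hleading] using
    (hasFPowerSeriesOnBall_tsum_ofScalars hc).deriv_ofScalars.hasFPowerSeriesAt.isBigO_sub_sum_pow
      (n + 1)

theorem isBigO_pow_pow_of_le {m n : ℕ} (hmn : m ≤ n) :
    (fun x : 𝕜 => x ^ n) =O[𝓝 0] fun x => x ^ m := by
  rcases hmn.lt_or_eq with hlt | rfl
  · exact (isLittleO_pow_pow hlt).isBigO
  · exact isBigO_refl _ _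

end PowerSeries

theorem eq_zero_of_mul_pow_isBigO_pow {a : ℝ} {m n : ℕ} (hmn : m < n)
    (h : (fun τ : ℝ => a * τ ^ m) =O[𝓝[>] 0] fun τ => τ ^ n) : a = 0 := by
  by_contra ha
  have hself : (fun τ : ℝ => τ ^ m) =o[𝓝[>] 0] fun τ => τ ^ m :=
    ((isBigO_self_const_mul ha _ _).trans h).trans_isLittleO
      ((isLittleO_pow_pow hmn).mono nhdsWithin_le_nhds)
  have hne : ∀ᶠ τ : ℝ in 𝓝[>] 0, τ ^ m ≠ 0 := by
    filter_upwards [self_mem_nhdsWithin] with τ hτ using pow_ne_zero m (ne_of_gt hτ)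
  exact isLittleO_irrefl hne.frequently hself

theorem eq_and_add_eq_zero_of_isBigO_pow_min_succ {a b : ℝ} {m n : ℕ} (ha : a ≠ 0) (hb : b ≠ 0)
    (h : (fun τ : ℝ => a * τ ^ m + b * τ ^ n) =O[𝓝[>] 0] fun τ => τ ^ (min m n + 1)) :
    m = n ∧ a + b = 0 := by
  have lower_vanishes {a b : ℝ} {m n : ℕ} (hmn : m < n)
      (h : (fun τ : ℝ => a * τ ^ m + b * τ ^ n) =O[𝓝[>] 0] fun τ => τ ^ (m + 1)) : a = 0 := by
    have hb : (fun τ : ℝ => b * τ ^ n) =O[𝓝[>] 0] fun τ => τ ^ (m + 1) :=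
      ((isBigO_pow_pow_of_le hmn).mono nhdsWithin_le_nhds).const_mul_left b
    exact eq_zero_of_mul_pow_isBigO_pow m.lt_succ_self (by simpa using h.sub hb)
  rcases lt_trichotomy m n with hlt | rfl | hgt
  · exact absurd (lower_vanishes hlt (by simpa [hlt.le] using h)) ha
  · refine ⟨rfl, eq_zero_of_mul_pow_isBigO_pow m.lt_succ_self ?_⟩
    simpa [add_mul] using h
  · refine absurd (lower_vanishes (a := b) (b := a) hgt ?_) hb
    simpa [hgt.le, add_comm] using h

/-- Bootstrapping order-of-accuracy argument: if the log-price error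
`g(τ) = Σ_{k≥ω} c_k τ^k` satisfies a PDE whose right-hand side is
`h(τ) + E(τ)` with `h(τ) = K₃τ³ + O(τ⁴)`, the remaining (spatial derivative)
terms `L` are `O(τ^ω)`, and the error terms `E` are sums of products of an
`O(τ)` factor and an `O(τ³)` factor, then `ω = 4` and `c₄ = -K₃/4`. -/
theorem bootstrap_order_of_accuracy (c : ℕ → ℝ) (ω : ℕ) (hω : 1 ≤ ω)
    (hcz : ∀ k, k < ω → c k = 0) (hcω : c ω ≠ 0)
    (hsum : ∀ τ : ℝ, Summable (fun k => c k * τ ^ k))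
    (L h E : ℝ → ℝ) (K₃ : ℝ) (hK₃ : K₃ ≠ 0)
    (u v : Fin 3 → ℝ → ℝ)
    (hu : ∀ i, (u i) =O[𝓝[>] (0:ℝ)] (fun τ => τ))
    (hv : ∀ i, (v i) =O[𝓝[>] (0:ℝ)] (fun τ => τ ^ 3))
    (hE : ∀ τ : ℝ, E τ = ∑ i : Fin 3, u i τ * v i τ)
    (hL : L =O[𝓝[>] (0:ℝ)] (fun τ => τ ^ ω))
    (hh : (fun τ => h τ - K₃ * τ ^ 3) =O[𝓝[>] (0:ℝ)] (fun τ => τ ^ 4))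
    (hpde : ∀ τ : ℝ, 0 < τ →
      -(deriv (fun t => ∑' k : ℕ, c k * t ^ k) τ) + L τ = h τ + E τ) :
    ω = 4 ∧ c 4 = -(1 / 4) * K₃ := by
  have hE4 : E =O[𝓝[>] 0] fun τ => τ ^ 4 := by
    have hprod (i : Fin 3) : (fun τ => u i τ * v i τ) =O[𝓝[>] 0] fun τ => τ ^ 4 := by
      simpa [← pow_succ'] using (hu i).mul (hv i)
    rw [funext hE]
    exact IsBigO.fun_sum fun i _ => hprod i
  have hD := (isBigO_deriv_tsum_pow_sub_leading (by simpa using hsum 1) hω hcz).mono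
    (nhdsWithin_le_nhds (s := Set.Ioi 0))
  have hτω : (fun τ : ℝ => τ ^ ω) =O[𝓝[>] 0] fun τ => τ ^ (min (ω - 1) 3 + 1) :=
    (isBigO_pow_pow_of_le (by omega)).mono nhdsWithin_le_nhds
  have hτ4 : (fun τ : ℝ => τ ^ 4) =O[𝓝[>] 0] fun τ => τ ^ (min (ω - 1) 3 + 1) :=
    (isBigO_pow_pow_of_le (by omega)).mono nhdsWithin_le_nhds
  have hlow : (fun τ : ℝ => ω * c ω * τ ^ (ω - 1) + K₃ * τ ^ 3) =O[𝓝[>] 0]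
      fun τ => τ ^ (min (ω - 1) 3 + 1) := by
    refine IsBigO.congr' (((hL.trans hτω).sub (hD.trans hτω)).sub ((hh.trans hτ4).add
      (hE4.trans hτ4))) ?_ EventuallyEq.rfl
    filter_upwards [self_mem_nhdsWithin] with τ hτ
    linear_combination hpde τ hτ
  obtain ⟨hdeg, hcoef⟩ := eq_and_add_eq_zero_of_isBigO_pow_min_succ
    (mul_ne_zero (by exact_mod_cast (by omega : ω ≠ 0)) hcω) hK₃ hlow
  obtain rfl : ω = 4 := by omega
  refine ⟨rfl, ?_⟩
  norm_num at hcoef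
  linarith
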